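/- Combined no-collision bound: with the notation of the previous two statements, for each fixed i one has Σ_{j ≠ i} F_{ij} + (1/2) Σ_{(j,k): i,j,k distinct} F̃_{ijk} ≤ 1. In particular, the two sums cannot both be nonzero. -/

import Mathlib

open Finset

noncomputable section

/-- The cut-off `F_{ij}`: indicator that `|x_i − x_j| ≤ R` and all other points
lie at distance `> 2R` from the midpoint `(x_i + x_j)/2`. -/
def Fpair {n : ℕ} (x : Fin n → EuclideanSpace ℝ (Fin 3)) (R : ℝ)
    (i j : Fin n) : ℝ :=
  if dist (x i) (x j) ≤ R ∧
      (∀ m, m ≠ i → m ≠ j → 2 * R < dist (midpoint ℝ (x i) (x j)) (x m))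
    then 1 else 0

/-- The cut-off `F̃_{ijk}`: indicator that `|x_i − x_j| ≤ R`, `|x_i − x_k| ≤ R`
and all other points lie at distance `> 2R` from the barycentre
`(x_i + x_j + x_k)/3`. -/
def Ftriple {n : ℕ} (x : Fin n → EuclideanSpace ℝ (Fin 3)) (R : ℝ)
    (i j k : Fin n) : ℝ :=
  if dist (x i) (x j) ≤ R ∧ dist (x i) (x k) ≤ R ∧
      (∀ m, m ≠ i → m ≠ j → m ≠ k →
        2 * R < dist ((3 : ℝ)⁻¹ • (x i + x j + x k)) (x m))
    then 1 else 0

private lemma not_far_mid {R : ℝ} (hR : 0 < R) (a b m : EuclideanSpace ℝ (Fin 3))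
    (hab : dist a b ≤ R) (ham : dist a m ≤ R) :
    ¬ 2 * R < dist (midpoint ℝ a b) m := by
  have h1 : dist (midpoint ℝ a b) a = dist a b / 2 := by
    rw [dist_midpoint_left]; norm_num; ring
  have h2 := dist_triangle (midpoint ℝ a b) a m
  push_neg
  nlinarith

private lemma not_far_bary {R : ℝ} (hR : 0 < R) (a b c m : EuclideanSpace ℝ (Fin 3))
    (hab : dist a b ≤ R) (hac : dist a c ≤ R) (ham : dist a m ≤ R) :
    ¬ 2 * R < dist ((3 : ℝ)⁻¹ • (a + b + c)) m := by
  have h1 : dist ((3 : ℝ)⁻¹ • (a + b + c)) a ≤ (dist a b + dist a c) / 3 := by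
    rw [dist_eq_norm]
    have he : (3 : ℝ)⁻¹ • (a + b + c) - a = (3 : ℝ)⁻¹ • ((b - a) + (c - a)) := by
      module
    rw [he, norm_smul]
    have h3 := norm_add_le (b - a) (c - a)
    rw [← dist_eq_norm' a b, ← dist_eq_norm' a c] at h3
    have : ‖(3 : ℝ)⁻¹‖ = 3⁻¹ := by norm_num
    rw [this]
    linarith
  have h2 := dist_triangle ((3 : ℝ)⁻¹ • (a + b + c)) a m
  push_neg
  nlinarith

/-- **Combined no-collision bound**: for each fixed `i`,
`∑_{j ≠ i} F_{ij} + (1/2) ∑_{(j,k) distinct from i and each other} F̃_{ijk} ≤ 1`. -/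
theorem combined_no_collision {n : ℕ} (x : Fin n → EuclideanSpace ℝ (Fin 3))
    (R : ℝ) (hR : 0 < R) (i : Fin n) :
    ∑ j ∈ univ.filter (· ≠ i), Fpair x R i j +
      (1 / 2 : ℝ) * ∑ p ∈ univ.filter
          (fun p : Fin n × Fin n => p.1 ≠ i ∧ p.2 ≠ i ∧ p.1 ≠ p.2),
        Ftriple x R i p.1 p.2 ≤ 1 := by
  by_cases hp : ∃ j, j ≠ i ∧ dist (x i) (x j) ≤ R ∧
      (∀ m, m ≠ i → m ≠ j → 2 * R < dist (midpoint ℝ (x i) (x j)) (x m))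
  · -- Case 1: some pair term is active; pair sum is 1, triple sum is 0.
    obtain ⟨j0, hj0i, hd0, hfar0⟩ := hp
    have htriple0 : ∀ p ∈ univ.filter
        (fun p : Fin n × Fin n => p.1 ≠ i ∧ p.2 ≠ i ∧ p.1 ≠ p.2),
        Ftriple x R i p.1 p.2 = 0 := by
      rintro ⟨j, k⟩ hpmem
      simp only [mem_filter, mem_univ, true_and] at hpmem
      obtain ⟨hji, hki, hjk⟩ := hpmem
      rw [Ftriple, if_neg]
      rintro ⟨hdj, hdk, hfar⟩
      by_cases h1 : j0 = j
      · subst h1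
        exact not_far_mid hR (x i) (x j0) (x k) hd0 hdk
          (hfar0 k hki (fun h => hjk h.symm))
      · by_cases h2 : j0 = k
        · subst h2
          exact not_far_mid hR (x i) (x j0) (x j) hd0 hdj (hfar0 j hji (Ne.symm h1))
        · exact not_far_bary hR (x i) (x j) (x k) (x j0) hdj hdk hd0
            (hfar j0 hj0i h1 h2)
    have hpair1 : ∑ j ∈ univ.filter (· ≠ i), Fpair x R i j = 1 := by
      have hj0mem : j0 ∈ univ.filter (· ≠ i) := by simp [hj0i]
      rw [Finset.sum_eq_single_of_mem j0 hj0mem]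
      · rw [Fpair, if_pos ⟨hd0, hfar0⟩]
      · intro b hb hbj0
        simp only [mem_filter, mem_univ, true_and] at hb
        rw [Fpair, if_neg]
        rintro ⟨hdb, hfarb⟩
        exact not_far_mid hR (x i) (x b) (x j0) hdb hd0
          (hfarb j0 hj0i (fun h => hbj0 h.symm))
    rw [hpair1, Finset.sum_eq_zero htriple0]
    norm_num
  · -- Case 2: no active pair term; pair sum is 0, triple sum at most 2.
    have hpair0 : ∑ j ∈ univ.filter (· ≠ i), Fpair x R i j = 0 := by
      apply Finset.sum_eq_zero
      intro j hj
      simp only [mem_filter, mem_univ, true_and] at hj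
      rw [Fpair, if_neg]
      intro hc
      exact hp ⟨j, hj, hc⟩
    rw [hpair0, zero_add]
    by_cases ht : ∃ j k, j ≠ i ∧ k ≠ i ∧ j ≠ k ∧
        (dist (x i) (x j) ≤ R ∧ dist (x i) (x k) ≤ R ∧
          (∀ m, m ≠ i → m ≠ j → m ≠ k →
            2 * R < dist ((3 : ℝ)⁻¹ • (x i + x j + x k)) (x m)))
    · obtain ⟨j0, k0, hj0i, hk0i, hj0k0, hd1, hd2, hfar0⟩ := ht
      set S2 := univ.filter
        (fun p : Fin n × Fin n => p.1 ≠ i ∧ p.2 ≠ i ∧ p.1 ≠ p.2) with hS2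
      have hbound : ∀ p ∈ S2, Ftriple x R i p.1 p.2 ≤
          (if p = (j0, k0) then (1 : ℝ) else 0) +
          (if p = (k0, j0) then (1 : ℝ) else 0) := by
        rintro ⟨j, k⟩ hpmem
        simp only [hS2, mem_filter, mem_univ, true_and] at hpmem
        obtain ⟨hji, hki, hjk⟩ := hpmem
        rw [Ftriple]
        split
        · rename_i hcond
          obtain ⟨hdj, hdk, hfar⟩ := hcond
          -- claim (j,k) = (j0,k0) or (k0,j0)
          have hkey : ((j, k) : Fin n × Fin n) = (j0, k0) ∨
              ((j, k) : Fin n × Fin n) = (k0, j0) := by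
            by_contra hno
            push_neg at hno
            obtain ⟨hne1, hne2⟩ := hno
            -- find m in {j0,k0} not in {j,k}
            have : ∃ m, m ≠ i ∧ m ≠ j ∧ m ≠ k ∧ dist (x i) (x m) ≤ R := by
              by_cases h1 : j0 = j
              · subst h1
                refine ⟨k0, hk0i, fun h => hj0k0 h.symm, ?_, hd2⟩
                intro h; subst h; exact hne1 rfl
              · by_cases h2 : j0 = k
                · subst h2
                  refine ⟨k0, hk0i, ?_, fun h => hj0k0 h.symm, hd2⟩
                  intro h; subst h; exact hne2 rfl
                · exact ⟨j0, hj0i, h1, h2, hd1⟩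
            obtain ⟨m, hmi, hmj, hmk, hdm⟩ := this
            exact not_far_bary hR (x i) (x j) (x k) (x m) hdj hdk hdm
              (hfar m hmi hmj hmk)
          rcases hkey with h | h <;> rw [h] <;> simp [Prod.ext_iff, hj0k0, Ne.symm hj0k0]
        · positivity
      have hsum2 : ∑ p ∈ S2, Ftriple x R i p.1 p.2 ≤ 2 := by
        calc ∑ p ∈ S2, Ftriple x R i p.1 p.2
            ≤ ∑ p ∈ S2, ((if p = (j0, k0) then (1 : ℝ) else 0) +
              (if p = (k0, j0) then (1 : ℝ) else 0)) :=
              Finset.sum_le_sum hbound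
          _ = (∑ p ∈ S2, (if p = (j0, k0) then (1 : ℝ) else 0)) +
              (∑ p ∈ S2, (if p = (k0, j0) then (1 : ℝ) else 0)) :=
              Finset.sum_add_distrib
          _ ≤ 1 + 1 := by
              gcongr <;> rw [Finset.sum_ite_eq'] <;> split <;> norm_num
          _ = 2 := by norm_num
      linarith
    · have : ∑ p ∈ univ.filter
          (fun p : Fin n × Fin n => p.1 ≠ i ∧ p.2 ≠ i ∧ p.1 ≠ p.2),
          Ftriple x R i p.1 p.2 = 0 := by
        apply Finset.sum_eq_zero
        rintro ⟨j, k⟩ hpmem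
        simp only [mem_filter, mem_univ, true_and] at hpmem
        obtain ⟨hji, hki, hjk⟩ := hpmem
        rw [Ftriple, if_neg]
        intro hc
        exact ht ⟨j, k, hji, hki, hjk, hc⟩
      rw [this]
      norm_num
  
end
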